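/- Let β be an alternate base of period p and a a β-representation of 1. Then a is the greedy β-expansion of 1 if and only if σ^{pm}(a) <_lex a for all m ≥ 1, and σ^{pm+i}(a) <_lex d*_{β^{(i)}}(1) for all m ∈ ℕ and all i ∈ {1, …, p−1}. -/

import Mathlib

/-
Write `T n` for the value of the tail `σⁿ a` in the shifted base `β⁽ⁿ⁾`, so that
`β n * T n = a n + T (n + 1)` and `T 0 = 1`. The greedy algorithm on `1` reproduces `a` exactly
when `T n < 1` for all `n ≥ 1`, its remainders then being the `T n`. Lexicographic and numerical
order are tied by one estimate: if `b` and `c` first differ at `ℓ`, with `b ℓ < c ℓ`, then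
`val c - val b ≥ (1 - T_b (ℓ + 1) + T_c (ℓ + 1)) / (β 0 ⋯ β ℓ)`.
Since tails of `a` and of a quasi-greedy expansion have value at most `1`, this turns `T n < 1`
into `σⁿ a <_lex a` when `p ∣ n` (then `β⁽ⁿ⁾ = β`) and `σⁿ a <_lex d*_{β⁽ⁿ⁾}(1)` otherwise.
Conversely, the same estimate applied to truncations gives `T n ≤ 1`, and then `T n < 1`: the
quasi-greedy tails are positive, while for `p ∣ n` equality would force `T (n + ℓ + 1) = 1` although
`T (ℓ + 1) = 0` makes all later tails vanish.
-/

open Filter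

/-- Product of the first `n+1` terms of the base sequence. -/
noncomputable def cprod (β : ℕ → ℝ) (n : ℕ) : ℝ := ∏ i ∈ Finset.range (n+1), β i

/-- A Cantor real base: all terms exceed 1 and the partial products tend to infinity. -/
def IsCantorBase (β : ℕ → ℝ) : Prop :=
  (∀ n, 1 < β n) ∧ Tendsto (cprod β) atTop atTop

/-- Value of a real-digit sequence in a Cantor base. -/
noncomputable def valB (β : ℕ → ℝ) (a : ℕ → ℝ) : ℝ := ∑' n, a n / cprod β n

/-- Value of a natural-digit sequence in a Cantor base. -/
noncomputable def valN (β : ℕ → ℝ) (a : ℕ → ℕ) : ℝ := valB β (fun n => (a n : ℝ))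

/-- Remainders of the greedy algorithm. -/
noncomputable def greedyRem (β : ℕ → ℝ) (x : ℝ) : ℕ → ℝ
  | 0 => β 0 * x - ⌊β 0 * x⌋
  | n+1 => β (n+1) * greedyRem β x n - ⌊β (n+1) * greedyRem β x n⌋

/-- Digits of the greedy expansion. -/
noncomputable def greedy (β : ℕ → ℝ) (x : ℝ) : ℕ → ℕ
  | 0 => (⌊β 0 * x⌋).toNat
  | n+1 => (⌊β (n+1) * greedyRem β x n⌋).toNat

/-- Remainders of the quasi-greedy algorithm started at `1`:
at each step the largest digit keeping the remainder strictly positive is chosen. -/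
noncomputable def qRem (β : ℕ → ℝ) : ℕ → ℝ
  | 0 => β 0 - (⌈β 0⌉ - 1)
  | n+1 => β (n+1) * qRem β n - (⌈β (n+1) * qRem β n⌉ - 1)

/-- Digits of the quasi-greedy expansion of `1`. -/
noncomputable def quasiGreedy (β : ℕ → ℝ) : ℕ → ℕ
  | 0 => (⌈β 0⌉ - 1).toNat
  | n+1 => (⌈β (n+1) * qRem β n⌉ - 1).toNat

/-- The `n`-shifted base `β^{(n)}`. -/
def shiftBase (β : ℕ → ℝ) (n : ℕ) : ℕ → ℝ := fun k => β (n + k)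

/-- The `n`-fold shift `σ^n` of a digit sequence. -/
def shiftSeq (a : ℕ → ℕ) (n : ℕ) : ℕ → ℕ := fun k => a (n + k)

/-- Strict lexicographic order on digit sequences. -/
def LexLt (a b : ℕ → ℕ) : Prop := ∃ ℓ, (∀ k, k < ℓ → a k = b k) ∧ a ℓ < b ℓ

/-- Lexicographic order on digit sequences. -/
def LexLe (a b : ℕ → ℕ) : Prop := LexLt a b ∨ a = b

/-- The set of greedy expansions of points of `[0,1)`. -/
def Dset (β : ℕ → ℝ) : Set (ℕ → ℕ) := {a | ∃ x ∈ Set.Ico (0:ℝ) 1, a = greedy β x}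

open Filter Finset

abbrev DigitSummable (δ : ℕ → ℝ) (b : ℕ → ℕ) : Prop :=
  Summable fun n => (b n : ℝ) / cprod δ n

noncomputable def tailVal (δ : ℕ → ℝ) (b : ℕ → ℕ) (n : ℕ) : ℝ :=
  valN (shiftBase δ n) (shiftSeq b n)

def truncSeq (N : ℕ) (b : ℕ → ℕ) : ℕ → ℕ := fun k => if k < N then b k else 0

section Shift

variable {δ : ℕ → ℝ}

@[simp] lemma shiftBase_zero (δ : ℕ → ℝ) : shiftBase δ 0 = δ := by
  funext k; simp [shiftBase]

@[simp] lemma shiftSeq_zero (b : ℕ → ℕ) : shiftSeq b 0 = b := by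
  funext k; simp [shiftSeq]

lemma shiftBase_shiftBase (δ : ℕ → ℝ) (m n : ℕ) :
    shiftBase (shiftBase δ m) n = shiftBase δ (m + n) := by
  funext k; simp [shiftBase, add_assoc]

lemma shiftSeq_shiftSeq (b : ℕ → ℕ) (m n : ℕ) :
    shiftSeq (shiftSeq b m) n = shiftSeq b (m + n) := by
  funext k; simp [shiftSeq, add_assoc]

lemma cprod_pos (hδ : ∀ n, 0 < δ n) (n : ℕ) : 0 < cprod δ n :=
  prod_pos fun i _ => hδ i

lemma shiftBase_pos (hδ : ∀ n, 0 < δ n) (n k : ℕ) : 0 < shiftBase δ n k :=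
  hδ (n + k)

lemma cprod_zero (δ : ℕ → ℝ) : cprod δ 0 = δ 0 := by
  simp [cprod]

lemma cprod_succ (δ : ℕ → ℝ) (n : ℕ) : cprod δ (n + 1) = cprod δ n * δ (n + 1) :=
  prod_range_succ _ _

lemma cprod_succ_eq_mul (δ : ℕ → ℝ) (n : ℕ) :
    cprod δ (n + 1) = δ 0 * cprod (shiftBase δ 1) n := by
  rw [cprod, cprod, prod_range_succ', mul_comm]
  simp [shiftBase, add_comm]

lemma IsCantorBase.pos (hδ : IsCantorBase δ) (n : ℕ) : 0 < δ n :=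
  one_pos.trans (hδ.1 n)

lemma IsCantorBase.shiftBase_one (hδ : IsCantorBase δ) : IsCantorBase (shiftBase δ 1) := by
  refine ⟨fun n => hδ.1 (1 + n), ?_⟩
  have h : Tendsto (fun n => cprod δ (n + 1) / δ 0) atTop atTop :=
    ((tendsto_add_atTop_iff_nat 1).2 hδ.2).atTop_div_const (hδ.pos 0)
  refine h.congr fun n => ?_
  rw [cprod_succ_eq_mul, mul_div_cancel_left₀ _ (hδ.pos 0).ne']

lemma IsCantorBase.shiftBase (hδ : IsCantorBase δ) (n : ℕ) : IsCantorBase (shiftBase δ n) := by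
  induction n with
  | zero => simpa using hδ
  | succ n ih => simpa [shiftBase_shiftBase] using ih.shiftBase_one

lemma shiftBase_mul_add {p : ℕ} (hper : Function.Periodic δ p) (m i : ℕ) :
    shiftBase δ (p * m + i) = shiftBase δ i := by
  funext k
  show δ (p * m + i + k) = δ (i + k)
  rw [show p * m + i + k = i + k + m * p by ring]
  simpa using hper.nat_mul m (i + k)

end Shift

section Value

variable {δ : ℕ → ℝ} {b c : ℕ → ℕ}

lemma valN_nonneg (hδ : ∀ n, 0 < δ n) (b : ℕ → ℕ) : 0 ≤ valN δ b :=
  tsum_nonneg fun n => div_nonneg (Nat.cast_nonneg _) (cprod_pos hδ n).le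

lemma shiftSeq_one_div_cprod (hδ : ∀ n, 0 < δ n) (b : ℕ → ℕ) (n : ℕ) :
    (shiftSeq b 1 n : ℝ) / cprod (shiftBase δ 1) n = δ 0 * ((b (n + 1) : ℝ) / cprod δ (n + 1)) := by
  rw [cprod_succ_eq_mul, shiftSeq, add_comm 1 n]
  field_simp [(hδ 0).ne']

lemma DigitSummable.shiftSeq_one (hδ : ∀ n, 0 < δ n) (hb : DigitSummable δ b) :
    DigitSummable (shiftBase δ 1) (shiftSeq b 1) := by
  simpa only [DigitSummable, shiftSeq_one_div_cprod hδ] using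
    ((summable_nat_add_iff 1).2 hb).mul_left (δ 0)

lemma DigitSummable.shiftSeq (hδ : ∀ n, 0 < δ n) (hb : DigitSummable δ b) (n : ℕ) :
    DigitSummable (shiftBase δ n) (shiftSeq b n) := by
  induction n with
  | zero => simpa using hb
  | succ n ih =>
      simpa [shiftBase_shiftBase, shiftSeq_shiftSeq] using
        ih.shiftSeq_one (shiftBase_pos hδ n)

lemma mul_valN_eq (hδ : ∀ n, 0 < δ n) (hb : DigitSummable δ b) :
    δ 0 * valN δ b = b 0 + valN (shiftBase δ 1) (shiftSeq b 1) := by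
  have htail : valN (shiftBase δ 1) (shiftSeq b 1)
      = δ 0 * ∑' n, (b (n + 1) : ℝ) / cprod δ (n + 1) := by
    rw [← tsum_mul_left]
    exact tsum_congr (shiftSeq_one_div_cprod hδ b)
  rw [htail, valN, valB, hb.tsum_eq_zero_add, cprod_zero]
  field_simp [(hδ 0).ne']

lemma tailVal_zero (δ : ℕ → ℝ) (b : ℕ → ℕ) : tailVal δ b 0 = valN δ b := by
  simp [tailVal]

lemma tailVal_nonneg (hδ : ∀ n, 0 < δ n) (b : ℕ → ℕ) (n : ℕ) : 0 ≤ tailVal δ b n :=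
  valN_nonneg (shiftBase_pos hδ n) _

lemma tailVal_shift (δ : ℕ → ℝ) (b : ℕ → ℕ) (m n : ℕ) :
    tailVal (shiftBase δ m) (shiftSeq b m) n = tailVal δ b (m + n) := by
  simp only [tailVal, shiftBase_shiftBase, shiftSeq_shiftSeq]

lemma mul_tailVal_eq (hδ : ∀ n, 0 < δ n) (hb : DigitSummable δ b) (n : ℕ) :
    δ n * tailVal δ b n = b n + tailVal δ b (n + 1) := by
  have h := mul_valN_eq (shiftBase_pos hδ n) (hb.shiftSeq hδ n)
  simpa [tailVal, shiftBase_shiftBase, shiftSeq_shiftSeq, shiftBase, shiftSeq] using h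

lemma tailVal_eq_zero_of_le (hδ : ∀ n, 0 < δ n) (hb : DigitSummable δ b) {m n : ℕ}
    (h0 : tailVal δ b m = 0) (hmn : m ≤ n) : tailVal δ b n = 0 := by
  induction n, hmn using Nat.le_induction with
  | base => exact h0
  | succ n _ ih =>
      have h := mul_tailVal_eq hδ hb n
      rw [ih, mul_zero] at h
      linarith [tailVal_nonneg hδ b (n + 1), (Nat.cast_nonneg (b n) : (0 : ℝ) ≤ b n)]

lemma tailVal_eq_of_recursion (hδ : ∀ n, 0 < δ n) (hb : DigitSummable δ b) {r : ℕ → ℝ}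
    (hr0 : valN δ b = r 0) (hrec : ∀ n, δ n * r n = b n + r (n + 1)) (n : ℕ) :
    tailVal δ b n = r n := by
  induction n with
  | zero => rw [tailVal_zero, hr0]
  | succ n ih =>
      have h := mul_tailVal_eq hδ hb n
      rw [ih, hrec] at h
      linarith

lemma sum_range_succ_div_cprod (hδ : ∀ n, 0 < δ n) {r : ℕ → ℝ}
    (hrec : ∀ n, δ n * r n = b n + r (n + 1)) (N : ℕ) :
    ∑ k ∈ range (N + 1), (b k : ℝ) / cprod δ k = r 0 - r (N + 1) / cprod δ N := by
  induction N with
  | zero =>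
      simp only [zero_add, range_one, sum_singleton, cprod_zero]
      field_simp [(hδ 0).ne']
      linarith [hrec 0]
  | succ N ih =>
      have hN := (cprod_pos hδ N).ne'
      rw [sum_range_succ, ih, cprod_succ]
      field_simp [(hδ (N + 1)).ne']
      linarith [hrec (N + 1)]

lemma hasSum_of_recursion (hδ : IsCantorBase δ) {r : ℕ → ℝ} (hr0 : ∀ n, 0 ≤ r n)
    (hr1 : ∀ n, r n ≤ 1) (hrec : ∀ n, δ n * r n = b n + r (n + 1)) :
    HasSum (fun n => (b n : ℝ) / cprod δ n) (r 0) := by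
  rw [hasSum_iff_tendsto_nat_of_nonneg
    (fun n => div_nonneg (Nat.cast_nonneg _) (cprod_pos hδ.pos n).le),
    ← tendsto_add_atTop_iff_nat 1]
  simp only [sum_range_succ_div_cprod hδ.pos hrec]
  have hsmall : Tendsto (fun N => r (N + 1) / cprod δ N) atTop (nhds 0) :=
    squeeze_zero (fun N => div_nonneg (hr0 _) (cprod_pos hδ.pos N).le)
      (fun N => by
        rw [Pi.inv_apply, ← one_div]
        exact div_le_div_of_nonneg_right (hr1 _) (cprod_pos hδ.pos N).le)
      hδ.2.inv_tendsto_atTop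
  simpa using (tendsto_const_nhds (x := r 0)).sub hsmall

end Value

section Lex

variable {δ : ℕ → ℝ} {b c : ℕ → ℕ}

-- `LexLt b c` is `toLex b < toLex c` in the linear order `Lex (ℕ → ℕ)`.
lemma lexLt_trichotomy (b c : ℕ → ℕ) : LexLt b c ∨ b = c ∨ LexLt c b :=
  (lt_trichotomy (toLex b) (toLex c)).imp_right (Or.imp_left fun h => toLex.injective h)

lemma valN_add_le_of_lex (hδ : ∀ n, 0 < δ n) (hb : DigitSummable δ b) (hc : DigitSummable δ c)
    {ℓ : ℕ} (hpre : ∀ k < ℓ, b k = c k) (hlt : b ℓ < c ℓ) :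
    valN δ b + (1 - tailVal δ b (ℓ + 1) + tailVal δ c (ℓ + 1)) / cprod δ ℓ ≤ valN δ c := by
  induction ℓ generalizing δ b c with
  | zero =>
      have hdigit : (b 0 : ℝ) + 1 ≤ c 0 := by exact_mod_cast hlt
      refine le_of_mul_le_mul_left ?_ (hδ 0)
      rw [cprod_zero, mul_add, mul_div_cancel₀ _ (hδ 0).ne', mul_valN_eq hδ hb, mul_valN_eq hδ hc]
      simp only [tailVal, zero_add]
      linarith
  | succ ℓ ih =>
      have h := ih (shiftBase_pos hδ 1) (hb.shiftSeq_one hδ) (hc.shiftSeq_one hδ)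
        (fun k hk => hpre (1 + k) (by omega)) (by simpa [shiftSeq, add_comm] using hlt)
      rw [tailVal_shift, tailVal_shift, add_comm 1 (ℓ + 1)] at h
      have hcancel : ∀ x : ℝ, δ 0 * (x / (δ 0 * cprod (shiftBase δ 1) ℓ))
          = x / cprod (shiftBase δ 1) ℓ := fun x => by
        field_simp [(hδ 0).ne', (cprod_pos (shiftBase_pos hδ 1) ℓ).ne']
      refine le_of_mul_le_mul_left ?_ (hδ 0)
      rw [cprod_succ_eq_mul, mul_add, hcancel, mul_valN_eq hδ hb, mul_valN_eq hδ hc,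
        hpre 0 (by omega)]
      linarith

lemma lexLt_of_valN_lt (hδ : ∀ n, 0 < δ n) (hb : DigitSummable δ b) (hc : DigitSummable δ c)
    (hc1 : ∀ n, tailVal δ c (n + 1) ≤ 1) (h : valN δ b < valN δ c) : LexLt b c := by
  rcases lexLt_trichotomy b c with hbc | rfl | ⟨ℓ, hpre, hlt⟩
  · exact hbc
  · exact absurd h (lt_irrefl _)
  · have hcb := valN_add_le_of_lex hδ hc hb hpre hlt
    have hgap : 0 ≤ (1 - tailVal δ c (ℓ + 1) + tailVal δ b (ℓ + 1)) / cprod δ ℓ :=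
      div_nonneg (by linarith [hc1 ℓ, tailVal_nonneg hδ b (ℓ + 1)]) (cprod_pos hδ ℓ).le
    linarith

lemma summable_truncSeq (δ : ℕ → ℝ) (N : ℕ) (b : ℕ → ℕ) : DigitSummable δ (truncSeq N b) :=
  summable_of_ne_finset_zero (s := range N) fun k hk => by
    simp [truncSeq, show ¬k < N by simpa using hk]

lemma valN_truncSeq (δ : ℕ → ℝ) (N : ℕ) (b : ℕ → ℕ) :
    valN δ (truncSeq N b) = ∑ k ∈ range N, (b k : ℝ) / cprod δ k := by
  rw [valN, valB, tsum_eq_sum (s := range N) fun k hk => by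
    simp [truncSeq, show ¬k < N by simpa using hk]]
  exact sum_congr rfl fun k hk => by simp [truncSeq, mem_range.1 hk]

lemma shiftSeq_truncSeq (N n : ℕ) (b : ℕ → ℕ) :
    shiftSeq (truncSeq N b) n = truncSeq (N - n) (shiftSeq b n) := by
  funext k
  simp only [shiftSeq, truncSeq]
  split_ifs <;> first | rfl | omega

lemma tailVal_le_one_of_forall_lexLt (hδ : ∀ n, 0 < δ n)
    (hdom : ∀ n, 1 ≤ n → ∃ c, LexLt (shiftSeq b n) c ∧ DigitSummable (shiftBase δ n) c ∧
      valN (shiftBase δ n) c ≤ 1)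
    {n : ℕ} (hn : 1 ≤ n) : tailVal δ b n ≤ 1 := by
  -- Induction on the truncation length: past the first difference with `c`, the tail of a
  -- truncation is a shorter truncation of a later tail.
  have key : ∀ N n, 1 ≤ n → valN (shiftBase δ n) (truncSeq N (shiftSeq b n)) ≤ 1 := by
    intro N
    induction N using Nat.strong_induction_on with
    | _ N ih =>
      intro n hn
      obtain ⟨c, ⟨ℓ, hpre, hlt⟩, hc, hc1⟩ := hdom n hn
      have hδn := shiftBase_pos hδ n
      rcases le_or_gt N ℓ with hNℓ | hℓN
      · have htrunc : truncSeq N (shiftSeq b n) = truncSeq N c := by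
          funext k
          simp only [truncSeq]
          split_ifs with hk
          exacts [hpre k (by omega), rfl]
        rw [htrunc, valN_truncSeq]
        exact (hc.sum_le_tsum _ fun k _ =>
          div_nonneg (Nat.cast_nonneg _) (cprod_pos hδn k).le).trans hc1
      · have htail : tailVal (shiftBase δ n) (truncSeq N (shiftSeq b n)) (ℓ + 1) ≤ 1 := by
          rw [tailVal, shiftSeq_truncSeq, shiftSeq_shiftSeq, shiftBase_shiftBase]
          exact ih _ (by omega) _ (by omega)
        have h := valN_add_le_of_lex hδn (summable_truncSeq _ N (shiftSeq b n)) hc (ℓ := ℓ)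
          (fun k hk => by simp [truncSeq, show k < N by omega, hpre k hk])
          (by simpa [truncSeq, hℓN] using hlt)
        have hgap : 0 ≤ (1 - tailVal (shiftBase δ n) (truncSeq N (shiftSeq b n)) (ℓ + 1)
            + tailVal (shiftBase δ n) c (ℓ + 1)) / cprod (shiftBase δ n) ℓ :=
          div_nonneg (by linarith [tailVal_nonneg hδn c (ℓ + 1)]) (cprod_pos hδn ℓ).le
        linarith
  refine Real.tsum_le_of_sum_range_le
    (fun k => div_nonneg (Nat.cast_nonneg _) (cprod_pos (shiftBase_pos hδ n) k).le) fun N => ?_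
  rw [← valN_truncSeq]
  exact key N n hn

end Lex

section QuasiGreedy

variable {γ : ℕ → ℝ}

/-- The quasi-greedy remainders of `1`, indexed so that the `n`-th digit is computed from
`qRemOne γ n`. -/
noncomputable def qRemOne (γ : ℕ → ℝ) : ℕ → ℝ
  | 0 => 1
  | n + 1 => qRem γ n

lemma quasiGreedy_eq (γ : ℕ → ℝ) (n : ℕ) :
    quasiGreedy γ n = (⌈γ n * qRemOne γ n⌉ - 1).toNat := by
  cases n <;> simp [quasiGreedy, qRemOne]

lemma qRemOne_succ (γ : ℕ → ℝ) (n : ℕ) :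
    qRemOne γ (n + 1) = γ n * qRemOne γ n - (⌈γ n * qRemOne γ n⌉ - 1) := by
  cases n <;> simp [qRemOne, qRem]

lemma qRemOne_mem (hγ : ∀ n, 0 < γ n) (n : ℕ) : qRemOne γ n ∈ Set.Ioc 0 1 := by
  induction n with
  | zero => simp [qRemOne]
  | succ n ih =>
      have hy := mul_pos (hγ n) ih.1
      rw [qRemOne_succ]
      constructor <;>
        linarith [Int.ceil_lt_add_one (γ n * qRemOne γ n), Int.le_ceil (γ n * qRemOne γ n)]

lemma quasiGreedy_add_qRemOne (hγ : ∀ n, 0 < γ n) (n : ℕ) :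
    (quasiGreedy γ n : ℝ) + qRemOne γ (n + 1) = γ n * qRemOne γ n := by
  have hceil : 1 ≤ ⌈γ n * qRemOne γ n⌉ :=
    Int.one_le_ceil_iff.2 (mul_pos (hγ n) (qRemOne_mem hγ n).1)
  have hcast : ((⌈γ n * qRemOne γ n⌉ - 1).toNat : ℝ) = ((⌈γ n * qRemOne γ n⌉ - 1 : ℤ) : ℝ) := by
    exact_mod_cast Int.toNat_of_nonneg (by omega)
  rw [quasiGreedy_eq, qRemOne_succ, hcast]
  push_cast
  ring

lemma hasSum_quasiGreedy (hγ : IsCantorBase γ) :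
    HasSum (fun n => (quasiGreedy γ n : ℝ) / cprod γ n) 1 :=
  hasSum_of_recursion hγ (fun n => (qRemOne_mem hγ.pos n).1.le) (fun n => (qRemOne_mem hγ.pos n).2)
    fun n => (quasiGreedy_add_qRemOne hγ.pos n).symm

lemma valN_quasiGreedy (hγ : IsCantorBase γ) : valN γ (quasiGreedy γ) = 1 :=
  (hasSum_quasiGreedy hγ).tsum_eq

lemma tailVal_quasiGreedy (hγ : IsCantorBase γ) (n : ℕ) :
    tailVal γ (quasiGreedy γ) n = qRemOne γ n :=
  tailVal_eq_of_recursion hγ.pos (hasSum_quasiGreedy hγ).summable (valN_quasiGreedy hγ)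
    (fun n => (quasiGreedy_add_qRemOne hγ.pos n).symm) n

end QuasiGreedy

section Greedy

variable {β : ℕ → ℝ} {a : ℕ → ℕ}

/-- The greedy remainders of `1`, indexed so that the `n`-th digit is computed from
`greedyRemOne β n`. -/
noncomputable def greedyRemOne (β : ℕ → ℝ) : ℕ → ℝ
  | 0 => 1
  | n + 1 => greedyRem β 1 n

lemma greedy_one_eq (β : ℕ → ℝ) (n : ℕ) : greedy β 1 n = ⌊β n * greedyRemOne β n⌋.toNat := by
  cases n <;> rfl

lemma greedyRemOne_succ (β : ℕ → ℝ) (n : ℕ) :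
    greedyRemOne β (n + 1) = Int.fract (β n * greedyRemOne β n) := by
  cases n <;> rfl

lemma floor_natCast_add_toNat_eq_iff {m : ℕ} {t : ℝ} (ht : 0 ≤ t) :
    ⌊(m : ℝ) + t⌋.toNat = m ↔ t < 1 := by
  rw [Int.floor_natCast_add]
  have hfloor := Int.floor_nonneg.2 ht
  constructor
  · intro h
    exact (Int.floor_eq_zero_iff.1 (by omega)).2
  · intro h
    rw [Int.floor_eq_zero_iff.2 ⟨ht, h⟩]
    simp

theorem eq_greedy_one_iff (hβ : ∀ n, 0 < β n) (ha : DigitSummable β a) (hval : valN β a = 1) :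
    a = greedy β 1 ↔ ∀ n, tailVal β a (n + 1) < 1 := by
  have hstep : ∀ n, greedyRemOne β n = tailVal β a n →
      β n * greedyRemOne β n = a n + tailVal β a (n + 1) := fun n h => by
    rw [h, mul_tailVal_eq hβ ha]
  have hrem : ∀ N, (∀ n < N, tailVal β a (n + 1) < 1) → greedyRemOne β N = tailVal β a N := by
    intro N
    induction N with
    | zero => intro _; rw [tailVal_zero, hval]; rfl
    | succ N ih =>
        intro h
        rw [greedyRemOne_succ, hstep N (ih fun n hn => h n (by omega)), Int.fract_natCast_add,
          Int.fract_eq_self.2 ⟨tailVal_nonneg hβ a _, h N (by omega)⟩]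
  have hdigit : ∀ n, greedyRemOne β n = tailVal β a n →
      (a n = greedy β 1 n ↔ tailVal β a (n + 1) < 1) := fun n h => by
    rw [greedy_one_eq, hstep n h, eq_comm]
    exact floor_natCast_add_toNat_eq_iff (tailVal_nonneg hβ a _)
  constructor
  · intro hg n
    induction n using Nat.strong_induction_on with
    | _ n ih => exact (hdigit n (hrem n ih)).1 (congrFun hg n)
  · intro h
    funext n
    exact (hdigit n (hrem n fun k _ => h k)).2 (h n)

end Greedy

section Comparison

variable {δ : ℕ → ℝ} {b : ℕ → ℕ}

lemma lexLt_self_of_tailVal_lt (hδ : ∀ n, 0 < δ n) (hb : DigitSummable δ b)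
    (hval : valN δ b = 1) (htail : ∀ k, tailVal δ b (k + 1) ≤ 1) {n : ℕ}
    (hn : shiftBase δ n = δ) (h : tailVal δ b n < 1) : LexLt (shiftSeq b n) b := by
  have hbn := hb.shiftSeq hδ n
  rw [tailVal, hn] at h
  rw [hn] at hbn
  exact lexLt_of_valN_lt hδ hbn hb htail (h.trans_eq hval.symm)

lemma lexLt_quasiGreedy_of_tailVal_lt (hδ : IsCantorBase δ) (hb : DigitSummable δ b) {n : ℕ}
    (h : tailVal δ b n < 1) : LexLt (shiftSeq b n) (quasiGreedy (shiftBase δ n)) := by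
  have hγ := hδ.shiftBase n
  refine lexLt_of_valN_lt hγ.pos (hb.shiftSeq hδ.pos n) (hasSum_quasiGreedy hγ).summable
    (fun k => ?_) (by rwa [valN_quasiGreedy hγ])
  rw [tailVal_quasiGreedy hγ]
  exact (qRemOne_mem hγ.pos _).2

lemma tailVal_lt_one_of_forall_lexLt (hδ : IsCantorBase δ) (hb : DigitSummable δ b)
    (hval : valN δ b = 1)
    (hdom : ∀ n, 1 ≤ n → (shiftBase δ n = δ ∧ LexLt (shiftSeq b n) b) ∨
      LexLt (shiftSeq b n) (quasiGreedy (shiftBase δ n)))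
    {n : ℕ} (hn : 1 ≤ n) : tailVal δ b n < 1 := by
  have hle : ∀ k, 1 ≤ k → tailVal δ b k ≤ 1 := fun k hk =>
    tailVal_le_one_of_forall_lexLt hδ.pos (fun m hm => by
      rcases hdom m hm with ⟨hper, hlex⟩ | hlex
      · exact ⟨b, hlex, by rwa [hper], by rw [hper, hval]⟩
      · exact ⟨_, hlex, (hasSum_quasiGreedy (hδ.shiftBase m)).summable,
          (valN_quasiGreedy (hδ.shiftBase m)).le⟩) hk
  have hδn := (hδ.shiftBase n).pos
  have hbn := hb.shiftSeq hδ.pos n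
  rcases hdom n hn with ⟨hper, ℓ, hpre, hlt⟩ | ⟨ℓ, hpre, hlt⟩
  · have h := valN_add_le_of_lex hδn hbn (by rwa [hper]) hpre hlt
    rw [← tailVal, tailVal_shift, hper, hval] at h
    refine (hle n hn).lt_of_ne fun hone => ?_
    rw [hone] at h
    have hgap : 1 - tailVal δ b (n + (ℓ + 1)) + tailVal δ b (ℓ + 1) ≤ 0 := by
      by_contra hgap
      linarith [div_pos (not_le.1 hgap) (cprod_pos hδ.pos ℓ)]
    have hzero : tailVal δ b (ℓ + 1) = 0 :=
      le_antisymm (by linarith [hle (n + (ℓ + 1)) (by omega)]) (tailVal_nonneg hδ.pos b _)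
    have := tailVal_eq_zero_of_le hδ.pos hb hzero (by omega : ℓ + 1 ≤ n + (ℓ + 1))
    linarith
  · have h := valN_add_le_of_lex hδn hbn (hasSum_quasiGreedy (hδ.shiftBase n)).summable hpre hlt
    rw [← tailVal, tailVal_shift, valN_quasiGreedy (hδ.shiftBase n),
      tailVal_quasiGreedy (hδ.shiftBase n)] at h
    have hgap : 0 < (1 - tailVal δ b (n + (ℓ + 1)) + qRemOne (shiftBase δ n) (ℓ + 1))
        / cprod (shiftBase δ n) ℓ :=
      div_pos (by linarith [hle (n + (ℓ + 1)) (by omega),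
        (qRemOne_mem (hδ.shiftBase n).pos (ℓ + 1)).1]) (cprod_pos hδn ℓ)
    linarith

end Comparison

lemma lexLt_cases_of_periodic {β : ℕ → ℝ} {p : ℕ} {a : ℕ → ℕ} (hp : 1 ≤ p)
    (hper : Function.Periodic β p)
    (hA : ∀ m : ℕ, 1 ≤ m → LexLt (shiftSeq a (p * m)) a)
    (hB : ∀ m i : ℕ, 1 ≤ i → i ≤ p - 1 →
      LexLt (shiftSeq a (p * m + i)) (quasiGreedy (shiftBase β i)))
    {n : ℕ} (hn : 1 ≤ n) :
    (shiftBase β n = β ∧ LexLt (shiftSeq a n) a) ∨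
      LexLt (shiftSeq a n) (quasiGreedy (shiftBase β n)) := by
  have hdiv := Nat.div_add_mod n p
  have hmod := Nat.mod_lt n (by omega : 0 < p)
  rw [← hdiv, shiftBase_mul_add hper]
  rcases Nat.eq_zero_or_pos (n % p) with h0 | hpos
  · left
    rw [h0, add_zero] at hdiv ⊢
    refine ⟨shiftBase_zero β, hA _ (Nat.pos_of_ne_zero fun hq => ?_)⟩
    rw [hq, mul_zero] at hdiv
    omega
  · exact Or.inr (hB _ _ hpos (by omega))

theorem stmt_19 (β : ℕ → ℝ) (hβ : IsCantorBase β) (p : ℕ) (hp : 1 ≤ p)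
    (hper : ∀ n, β (n + p) = β n) (a : ℕ → ℕ)
    (hsum : Summable (fun n => (a n : ℝ) / cprod β n)) (hval : valN β a = 1) :
    a = greedy β 1 ↔
      ((∀ m : ℕ, 1 ≤ m → LexLt (shiftSeq a (p * m)) a) ∧
       (∀ m : ℕ, ∀ i : ℕ, 1 ≤ i → i ≤ p - 1 →
         LexLt (shiftSeq a (p * m + i)) (quasiGreedy (shiftBase β i)))) := by
  have hlt_of_pos : (∀ n, tailVal β a (n + 1) < 1) → ∀ n, 1 ≤ n → tailVal β a n < 1 :=
    fun h n hn => by simpa [Nat.sub_add_cancel hn] using h (n - 1)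
  rw [eq_greedy_one_iff hβ.pos hsum hval]
  constructor
  · intro hT
    refine ⟨fun m hm => ?_, fun m i hi _ => ?_⟩
    · exact lexLt_self_of_tailVal_lt hβ.pos hsum hval (fun n => (hT n).le)
        (by simpa using shiftBase_mul_add hper m 0)
        (hlt_of_pos hT _ (Nat.mul_pos (by omega) (by omega)))
    · rw [← shiftBase_mul_add hper m i]
      exact lexLt_quasiGreedy_of_tailVal_lt hβ hsum (hlt_of_pos hT _ (by omega))
  · rintro ⟨hA, hB⟩ n
    exact tailVal_lt_one_of_forall_lexLt hβ hsum hval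
      (fun k hk => lexLt_cases_of_periodic hp hper hA hB hk) (Nat.le_add_left 1 n)
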